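/- arXiv:2304.13351 — 3 statements merged into one kernel-verified Lean document; each statement's English description precedes it below -/
import Mathlib

section
/- For every pair of natural numbers n, m ≥ 1 there exists a constant C > 0 (depending only on n and m) such that for all N ≥ 1 one has ‖[(S_+^N)^n, (S_-^N)^m]‖ ≤ C · N^{n+m−1}. -/
open scoped BigOperators

/-- Pauli matrices. -/
noncomputable def pauliX : Matrix (Fin 2) (Fin 2) ℂ := !![0, 1; 1, 0]
noncomputable def pauliY : Matrix (Fin 2) (Fin 2) ℂ := !![0, -Complex.I; Complex.I, 0]
noncomputable def pauliZ : Matrix (Fin 2) (Fin 2) ℂ := !![1, 0; 0, -1]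

/-- The operator `A` acting on the `k`-th tensor factor of `(ℂ²)^{⊗N}` (identity elsewhere),
realized as a matrix indexed by the product basis `Fin N → Fin 2`. -/
noncomputable def siteOp (N : ℕ) (A : Matrix (Fin 2) (Fin 2) ℂ) (k : Fin N) :
    Matrix (Fin N → Fin 2) (Fin N → Fin 2) ℂ :=
  fun x y => A (x k) (y k) * ∏ j ∈ Finset.univ.erase k, (if x j = y j then (1 : ℂ) else 0)

/-- Collective spin operator `(1/2) Σ_k A^{(k)}`. -/
noncomputable def collSpin (N : ℕ) (A : Matrix (Fin 2) (Fin 2) ℂ) :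
    Matrix (Fin N → Fin 2) (Fin N → Fin 2) ℂ :=
  (1 / 2 : ℂ) • ∑ k : Fin N, siteOp N A k

noncomputable def Sx (N : ℕ) := collSpin N pauliX
noncomputable def Sy (N : ℕ) := collSpin N pauliY
noncomputable def Sz (N : ℕ) := collSpin N pauliZ
noncomputable def Splus (N : ℕ) := Sx N + Complex.I • Sy N
noncomputable def Sminus (N : ℕ) := Sx N - Complex.I • Sy N

/-- The operator norm (ℓ²→ℓ²) of a square complex matrix. -/
noncomputable def opNorm {n : Type*} [Fintype n] [DecidableEq n] (M : Matrix n n ℂ) : ℝ :=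
  ‖Matrix.toEuclideanCLM (𝕜 := ℂ) M‖

/-! Writing `A^{(k)}` for `siteOp N A k`, the map `A ↦ A^{(k)}` is a star-algebra homomorphism, and
operators on distinct sites commute. Hence `S_± = ∑ₖ σ_±^{(k)}` and
`[S_+, S_-] = ∑ₖ [σ_+, σ_-]^{(k)} = 2 S_z`; since every Pauli site operator is unitary,
`‖S_±‖ ≤ N` and `‖[S_+, S_-]‖ ≤ N`. In any normed ring
`a^{n+1} c - c a^{n+1} = aⁿ [a, c] + (aⁿ c - c aⁿ) a` gives `‖[a^{n+1}, c]‖ ≤ (n+1) ‖a‖ⁿ ‖[a, c]‖`,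
and applying this twice bounds `‖[S_+ⁿ, S_-ᵐ]‖` by `n m N^{n+m-1}`. -/

open Function Matrix

section SiteOperators

variable {N : ℕ}

lemma siteOp_apply (A : Matrix (Fin 2) (Fin 2) ℂ) (k : Fin N) (x y : Fin N → Fin 2) :
    siteOp N A k x y = if update x k (y k) = y then A (x k) (y k) else 0 := by
  simp [siteOp, Finset.prod_boole, update_eq_iff, Finset.mem_erase, and_comm]

lemma siteOp_mulVec (A : Matrix (Fin 2) (Fin 2) ℂ) (k : Fin N) (v : (Fin N → Fin 2) → ℂ)
    (x : Fin N → Fin 2) :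
    (siteOp N A k *ᵥ v) x = ∑ t, A (x k) t * v (update x k t) := by
  refine (Fintype.sum_of_injective (update x k) (update_injective x k) _ _ ?_ ?_).symm
  · intro y hy
    simp only [siteOp_apply, if_neg fun h => hy ⟨y k, h⟩, zero_mul]
  · intro t
    simp [siteOp_apply]

lemma siteOp_mul_siteOp (A B : Matrix (Fin 2) (Fin 2) ℂ) (k : Fin N) :
    siteOp N A k * siteOp N B k = siteOp N (A * B) k := by
  refine ext_iff_mulVec.2 fun v => funext fun x => ?_
  simp only [← mulVec_mulVec, siteOp_mulVec, update_self, update_idem, mul_apply,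
    Finset.mul_sum, Finset.sum_mul, mul_assoc]
  exact Finset.sum_comm

lemma siteOp_commute (A B : Matrix (Fin 2) (Fin 2) ℂ) {k l : Fin N} (hkl : k ≠ l) :
    Commute (siteOp N A k) (siteOp N B l) := by
  refine ext_iff_mulVec.2 fun v => funext fun x => ?_
  simp only [← mulVec_mulVec, siteOp_mulVec, update_of_ne hkl, update_of_ne hkl.symm,
    update_comm hkl, Finset.mul_sum]
  rw [Finset.sum_comm]
  simp only [mul_left_comm]

lemma siteOp_one (k : Fin N) : siteOp N 1 k = 1 := by
  refine ext_iff_mulVec.2 fun v => funext fun x => ?_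
  simp [siteOp_mulVec, one_apply]

lemma siteOp_smul (c : ℂ) (A : Matrix (Fin 2) (Fin 2) ℂ) (k : Fin N) :
    siteOp N (c • A) k = c • siteOp N A k := by
  ext x y
  simp [siteOp, mul_assoc]

variable (N) in
noncomputable def siteStarAlgHom (k : Fin N) :
    Matrix (Fin 2) (Fin 2) ℂ →⋆ₐ[ℂ] Matrix (Fin N → Fin 2) (Fin N → Fin 2) ℂ where
  toFun A := siteOp N A k
  map_one' := siteOp_one k
  map_mul' A B := (siteOp_mul_siteOp A B k).symm
  map_zero' := by ext; simp [siteOp]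
  map_add' A B := by ext; simp [siteOp, add_mul]
  commutes' c := by
    simp only [Algebra.algebraMap_eq_smul_one, siteOp_smul, siteOp_one]
  map_star' A := by
    ext x y
    simp only [star_eq_conjTranspose, conjTranspose_apply, siteOp_apply, update_eq_iff]
    simp [eq_comm, apply_ite (starRingEnd ℂ)]

lemma siteStarAlgHom_apply (A : Matrix (Fin 2) (Fin 2) ℂ) (k : Fin N) :
    siteStarAlgHom N k A = siteOp N A k := rfl

end SiteOperators

noncomputable def sigmaPlus : Matrix (Fin 2) (Fin 2) ℂ := !![0, 1; 0, 0]
noncomputable def sigmaMinus : Matrix (Fin 2) (Fin 2) ℂ := !![0, 0; 1, 0]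

lemma pauliX_mem_unitary : pauliX ∈ unitary (Matrix (Fin 2) (Fin 2) ℂ) := by
  rw [Unitary.mem_iff, star_eq_conjTranspose]
  constructor <;> ext i j <;> fin_cases i <;> fin_cases j <;> simp [pauliX, mul_apply]

lemma pauliY_mem_unitary : pauliY ∈ unitary (Matrix (Fin 2) (Fin 2) ℂ) := by
  rw [Unitary.mem_iff, star_eq_conjTranspose]
  constructor <;> ext i j <;> fin_cases i <;> fin_cases j <;> simp [pauliY, mul_apply]

lemma pauliZ_mem_unitary : pauliZ ∈ unitary (Matrix (Fin 2) (Fin 2) ℂ) := by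
  rw [Unitary.mem_iff, star_eq_conjTranspose]
  constructor <;> ext i j <;> fin_cases i <;> fin_cases j <;> simp [pauliZ, mul_apply]

lemma sigmaPlus_eq : sigmaPlus = (1 / 2 : ℂ) • (pauliX + Complex.I • pauliY) := by
  ext i j; fin_cases i <;> fin_cases j <;> norm_num [sigmaPlus, pauliX, pauliY]

lemma sigmaMinus_eq : sigmaMinus = (1 / 2 : ℂ) • (pauliX - Complex.I • pauliY) := by
  ext i j; fin_cases i <;> fin_cases j <;> norm_num [sigmaMinus, pauliX, pauliY]

lemma sigmaPlus_mul_sigmaMinus_sub : sigmaPlus * sigmaMinus - sigmaMinus * sigmaPlus = pauliZ := by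
  ext i j; fin_cases i <;> fin_cases j <;> simp [sigmaPlus, sigmaMinus, pauliZ]

section CollectiveSpin

variable (N : ℕ)

lemma sum_siteOp_mul_sub (A B : Matrix (Fin 2) (Fin 2) ℂ) :
    (∑ k, siteOp N A k) * (∑ k, siteOp N B k) - (∑ k, siteOp N B k) * (∑ k, siteOp N A k) =
      ∑ k, siteOp N (A * B - B * A) k := by
  rw [Finset.sum_mul_sum, Finset.sum_mul_sum, Finset.sum_comm (f := fun k l => siteOp N B k * _),
    ← Finset.sum_sub_distrib]
  refine Finset.sum_congr rfl fun k _ => ?_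
  rw [← Finset.sum_sub_distrib, Finset.sum_eq_single k]
  · simp only [siteOp_mul_siteOp]
    exact (map_sub (siteStarAlgHom N k) _ _).symm
  · intro l _ hlk
    rw [(siteOp_commute A B hlk.symm).eq, sub_self]
  · simp

lemma Splus_eq_sum : Splus N = ∑ k, siteOp N sigmaPlus k := by
  simp only [Splus, Sx, Sy, collSpin, sigmaPlus_eq, ← siteStarAlgHom_apply, map_smul, map_add,
    smul_add, Finset.smul_sum, Finset.sum_add_distrib, smul_comm Complex.I]

lemma Sminus_eq_sum : Sminus N = ∑ k, siteOp N sigmaMinus k := by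
  simp only [Sminus, Sx, Sy, collSpin, sigmaMinus_eq, ← siteStarAlgHom_apply, map_smul, map_sub,
    smul_sub, Finset.smul_sum, Finset.sum_sub_distrib, smul_comm Complex.I]

lemma Splus_mul_Sminus_sub : Splus N * Sminus N - Sminus N * Splus N = (2 : ℂ) • Sz N := by
  rw [Splus_eq_sum, Sminus_eq_sum, sum_siteOp_mul_sub, sigmaPlus_mul_sigmaMinus_sub, Sz, collSpin,
    smul_smul]
  norm_num

lemma opNorm_siteOp {U : Matrix (Fin 2) (Fin 2) ℂ} (hU : U ∈ unitary (Matrix (Fin 2) (Fin 2) ℂ))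
    (k : Fin N) : opNorm (siteOp N U k) = 1 :=
  CStarRing.norm_of_mem_unitary <|
    Unitary.map_mem toEuclideanCLM (Unitary.map_mem (siteStarAlgHom N k) hU)

lemma opNorm_collSpin_le {U : Matrix (Fin 2) (Fin 2) ℂ}
    (hU : U ∈ unitary (Matrix (Fin 2) (Fin 2) ℂ)) : opNorm (collSpin N U) ≤ N / 2 := by
  calc opNorm (collSpin N U) = 1 / 2 * ‖∑ k, toEuclideanCLM (𝕜 := ℂ) (siteOp N U k)‖ := by
        simp [opNorm, collSpin, norm_smul]
    _ ≤ 1 / 2 * ∑ _k : Fin N, 1 := by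
        gcongr
        exact norm_sum_le_of_le _ fun k _ => (opNorm_siteOp N hU k).le
    _ = N / 2 := by simp [div_eq_inv_mul]

lemma opNorm_Sx_add_smul_Sy_le {c : ℂ} (hc : ‖c‖ = 1) : opNorm (Sx N + c • Sy N) ≤ N := by
  calc opNorm (Sx N + c • Sy N) ≤ opNorm (Sx N) + opNorm (Sy N) := by
        simpa [opNorm, norm_smul, hc] using
          norm_add_le (toEuclideanCLM (𝕜 := ℂ) (Sx N)) (c • toEuclideanCLM (𝕜 := ℂ) (Sy N))
    _ ≤ N / 2 + N / 2 :=
        add_le_add (opNorm_collSpin_le N pauliX_mem_unitary) (opNorm_collSpin_le N pauliY_mem_unitary)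
    _ = N := add_halves _

lemma opNorm_Splus_le : opNorm (Splus N) ≤ N :=
  opNorm_Sx_add_smul_Sy_le N (by simp)

lemma opNorm_Sminus_le : opNorm (Sminus N) ≤ N := by
  rw [Sminus, sub_eq_add_neg, ← neg_smul]
  exact opNorm_Sx_add_smul_Sy_le N (by simp)

lemma opNorm_Splus_mul_Sminus_sub_le :
    opNorm (Splus N * Sminus N - Sminus N * Splus N) ≤ N := by
  rw [Splus_mul_Sminus_sub]
  calc opNorm ((2 : ℂ) • Sz N) = 2 * opNorm (Sz N) := by simp [opNorm, norm_smul]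
    _ ≤ 2 * (N / 2) := by gcongr; exact opNorm_collSpin_le N pauliZ_mem_unitary
    _ = N := by ring

end CollectiveSpin

section NormedRing

variable {R : Type*} [NormedRing R]

lemma norm_pow_succ_mul_sub_mul_pow_succ_le (a c : R) (n : ℕ) :
    ‖a ^ (n + 1) * c - c * a ^ (n + 1)‖ ≤ (n + 1) * ‖a‖ ^ n * ‖a * c - c * a‖ := by
  induction n with
  | zero => simp
  | succ n ih =>
    have hsplit : a ^ (n + 2) * c - c * a ^ (n + 2) =
        a ^ (n + 1) * (a * c - c * a) + (a ^ (n + 1) * c - c * a ^ (n + 1)) * a := by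
      rw [pow_succ]
      noncomm_ring
    have hpow : ‖a ^ (n + 1)‖ ≤ ‖a‖ ^ (n + 1) := norm_pow_le' a n.succ_pos
    calc ‖a ^ (n + 2) * c - c * a ^ (n + 2)‖
        ≤ ‖a ^ (n + 1)‖ * ‖a * c - c * a‖ + ‖a ^ (n + 1) * c - c * a ^ (n + 1)‖ * ‖a‖ := by
          rw [hsplit]
          exact (norm_add_le _ _).trans (add_le_add (norm_mul_le _ _) (norm_mul_le _ _))
      _ ≤ ‖a‖ ^ (n + 1) * ‖a * c - c * a‖ + (n + 1) * ‖a‖ ^ n * ‖a * c - c * a‖ * ‖a‖ := by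
          gcongr
      _ = (↑(n + 1) + 1) * ‖a‖ ^ (n + 1) * ‖a * c - c * a‖ := by
          push_cast; ring

lemma norm_pow_succ_mul_pow_succ_sub_le (a b : R) (n m : ℕ) :
    ‖a ^ (n + 1) * b ^ (m + 1) - b ^ (m + 1) * a ^ (n + 1)‖ ≤
      (n + 1) * (m + 1) * ‖a‖ ^ n * ‖b‖ ^ m * ‖a * b - b * a‖ := by
  calc ‖a ^ (n + 1) * b ^ (m + 1) - b ^ (m + 1) * a ^ (n + 1)‖
      = ‖b ^ (m + 1) * a ^ (n + 1) - a ^ (n + 1) * b ^ (m + 1)‖ := norm_sub_rev _ _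
    _ ≤ (m + 1) * ‖b‖ ^ m * ‖b * a ^ (n + 1) - a ^ (n + 1) * b‖ :=
        norm_pow_succ_mul_sub_mul_pow_succ_le b _ m
    _ ≤ (m + 1) * ‖b‖ ^ m * ((n + 1) * ‖a‖ ^ n * ‖a * b - b * a‖) := by
        rw [norm_sub_rev]
        gcongr
        exact norm_pow_succ_mul_sub_mul_pow_succ_le a b n
    _ = (n + 1) * (m + 1) * ‖a‖ ^ n * ‖b‖ ^ m * ‖a * b - b * a‖ := by ring

end NormedRing

/-- For every n, m ≥ 1 there is a constant C > 0 (depending only on n,m) such that for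
all N ≥ 1, ‖[(S_+^N)^n, (S_-^N)^m]‖ ≤ C · N^(n+m-1). -/
theorem collective_spin_commutator_bound (n m : ℕ) (hn : 1 ≤ n) (hm : 1 ≤ m) :
    ∃ C : ℝ, 0 < C ∧ ∀ N : ℕ, 1 ≤ N →
      opNorm ((Splus N) ^ n * (Sminus N) ^ m - (Sminus N) ^ m * (Splus N) ^ n)
        ≤ C * (N : ℝ) ^ (n + m - 1) := by
  obtain ⟨n, rfl⟩ := Nat.exists_eq_add_of_le' hn
  obtain ⟨m, rfl⟩ := Nat.exists_eq_add_of_le' hm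
  refine ⟨(n + 1) * (m + 1), by positivity, fun N _ => ?_⟩
  set a := toEuclideanCLM (𝕜 := ℂ) (Splus N)
  set b := toEuclideanCLM (𝕜 := ℂ) (Sminus N)
  have ha : ‖a‖ ≤ N := opNorm_Splus_le N
  have hb : ‖b‖ ≤ N := opNorm_Sminus_le N
  have hab : ‖a * b - b * a‖ ≤ N := by
    simpa only [opNorm, map_sub, map_mul] using opNorm_Splus_mul_Sminus_sub_le N
  calc opNorm (Splus N ^ (n + 1) * Sminus N ^ (m + 1) - Sminus N ^ (m + 1) * Splus N ^ (n + 1))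
      = ‖a ^ (n + 1) * b ^ (m + 1) - b ^ (m + 1) * a ^ (n + 1)‖ := by
        simp only [opNorm, a, b, map_sub, map_mul, map_pow]
    _ ≤ (n + 1) * (m + 1) * ‖a‖ ^ n * ‖b‖ ^ m * ‖a * b - b * a‖ :=
        norm_pow_succ_mul_pow_succ_sub_le a b n m
    _ ≤ (n + 1) * (m + 1) * (N : ℝ) ^ n * (N : ℝ) ^ m * N := by gcongr
    _ = (n + 1) * (m + 1) * (N : ℝ) ^ (n + 1 + (m + 1) - 1) := by
        rw [show n + 1 + (m + 1) - 1 = n + m + 1 by omega]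
        ring
end

section
/- Fix β_c > 0 and β > 0. The gap consistency equation tanh(βω) = β_c·ω has a solution ω > 0 if and only if β > β_c, and when β > β_c this positive solution is unique. -/
/-!
Written as `tanh (β ω) / ω = β_c`, the gap equation asks for a value of the secant slope through
the origin of `ω ↦ tanh (β ω)`. Since `tanh' = cosh⁻²` decreases on `[0, ∞)`, `tanh` is strictly
concave there, so this slope is strictly decreasing in `ω > 0`. It tends to the derivative `β` at
`0⁺` and, `tanh` being bounded, to `0` at `∞`; by the intermediate value theorem it is therefore a
bijection of `(0, ∞)` onto `(0, β)`, and `β_c > 0` is attained, exactly once, iff `β_c < β`.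
-/

open Real Set Filter Topology

theorem StrictAntiOn.bijOn_Ioi_of_tendsto {f : ℝ → ℝ} {a b c : ℝ} (hf : StrictAntiOn f (Ioi a))
    (hfc : ContinuousOn f (Ioi a)) (hb : Tendsto f (𝓝[>] a) (𝓝 b))
    (hc : Tendsto f atTop (𝓝 c)) : BijOn f (Ioi a) (Ioo c b) := by
  refine ⟨fun x (hx : a < x) => ⟨?_, ?_⟩, hf.injOn, ?_⟩
  · have hx' : a < x + 1 := by linarith
    have hle : c ≤ f (x + 1) := le_of_tendsto hc <| by
      filter_upwards [eventually_gt_atTop (x + 1)] with z hz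
      exact (hf hx' (hx'.trans hz) hz).le
    exact hle.trans_lt (hf hx hx' (by linarith))
  · have hmid : a < (a + x) / 2 := by linarith
    have hle : f ((a + x) / 2) ≤ b := ge_of_tendsto hb <| by
      filter_upwards [Ioo_mem_nhdsGT hmid] with z hz
      exact (hf hz.1 hmid hz.2).le
    exact (hf hmid hx (by linarith)).trans_le hle
  · exact isPreconnected_Ioi.intermediate_value_Ioo (le_principal_iff.2 (Ioi_mem_atTop a))
      (le_principal_iff.2 self_mem_nhdsWithin) hfc hc hb

namespace Real

theorem hasDerivAt_tanh (x : ℝ) : HasDerivAt tanh (cosh x ^ 2)⁻¹ x := by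
  have h := (hasDerivAt_sinh x).div (hasDerivAt_cosh x) (cosh_pos x).ne'
  rw [← sq, ← sq, cosh_sq_sub_sinh_sq, one_div] at h
  rwa [show tanh = sinh / cosh from funext tanh_eq_sinh_div_cosh]

theorem continuous_tanh : Continuous tanh :=
  continuous_iff_continuousAt.2 fun x => (hasDerivAt_tanh x).continuousAt

theorem strictConcaveOn_tanh : StrictConcaveOn ℝ (Ici 0) tanh := by
  refine StrictAntiOn.strictConcaveOn_of_deriv (convex_Ici 0) continuous_tanh.continuousOn ?_
  rw [interior_Ici]
  intro x (hx : 0 < x) y (hy : 0 < y) hxy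
  simp only [(hasDerivAt_tanh _).deriv]
  gcongr
  exact cosh_lt_cosh.2 (by rwa [abs_of_pos hx, abs_of_pos hy])

theorem strictAntiOn_tanh_div_self : StrictAntiOn (fun x => tanh x / x) (Ioi 0) := by
  intro x (hx : 0 < x) y (hy : 0 < y) hxy
  simpa [tanh_zero] using
    strictConcaveOn_tanh.secant_strict_mono self_mem_Ici hx.le hy.le hx.ne' hy.ne' hxy

theorem strictAntiOn_tanh_mul_div {β : ℝ} (hβ : 0 < β) :
    StrictAntiOn (fun ω => tanh (β * ω) / ω) (Ioi 0) := by
  intro x (hx : 0 < x) y (hy : 0 < y) hxy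
  have h := mul_lt_mul_of_pos_left
    (strictAntiOn_tanh_div_self (mul_pos hβ hx) (mul_pos hβ hy) (by gcongr)) hβ
  simpa only [← mul_div_assoc, mul_div_mul_left _ _ hβ.ne'] using h

theorem tendsto_tanh_mul_div_nhdsGT_zero (β : ℝ) :
    Tendsto (fun ω => tanh (β * ω) / ω) (𝓝[>] 0) (𝓝 β) := by
  have h : HasDerivAt (fun ω => tanh (β * ω)) β 0 := by
    simpa [Function.comp_def] using
      (hasDerivAt_tanh (β * 0)).comp 0 ((hasDerivAt_id 0).const_mul β)
  simpa [slope_fun_def_field] using h.tendsto_slope.mono_left (nhdsGT_le_nhdsNE 0)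

theorem tendsto_tanh_mul_div_atTop (β : ℝ) :
    Tendsto (fun ω => tanh (β * ω) / ω) atTop (𝓝 0) := by
  simp only [div_eq_mul_inv]
  exact isBoundedUnder_le_mul_tendsto_zero
    ⟨1, eventually_map.2 (Eventually.of_forall fun ω => (abs_tanh_lt_one _).le)⟩
    tendsto_inv_atTop_zero

theorem bijOn_tanh_mul_div {β : ℝ} (hβ : 0 < β) :
    BijOn (fun ω => tanh (β * ω) / ω) (Ioi 0) (Ioo 0 β) :=
  (strictAntiOn_tanh_mul_div hβ).bijOn_Ioi_of_tendsto
    ((continuous_tanh.comp (continuous_const_mul β)).continuousOn.div continuousOn_id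
      fun _ hω => ne_of_gt hω)
    (tendsto_tanh_mul_div_nhdsGT_zero β) (tendsto_tanh_mul_div_atTop β)

end Real

/-- The gap consistency equation `tanh(βω) = β_c·ω` has a positive solution iff `β > β_c`,
and when `β > β_c` the positive solution is unique. -/
theorem gap_equation_solution (βc β : ℝ) (hβc : 0 < βc) (hβ : 0 < β) :
    ((∃ ω : ℝ, 0 < ω ∧ Real.tanh (β * ω) = βc * ω) ↔ βc < β) ∧
    (βc < β → ∃! ω : ℝ, 0 < ω ∧ Real.tanh (β * ω) = βc * ω) := by
  have hsol (ω : ℝ) : 0 < ω ∧ tanh (β * ω) = βc * ω ↔ ω ∈ Ioi 0 ∧ tanh (β * ω) / ω = βc :=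
    and_congr_right fun hω => (div_eq_iff hω.ne').symm
  have hbij := bijOn_tanh_mul_div hβ
  have hmem : βc ∈ Ioo 0 β ↔ βc < β := by simp [hβc]
  simp only [hsol]
  refine ⟨by rw [← hmem, ← hbij.image_eq]; rfl, fun h => ?_⟩
  obtain ⟨ω, hω, he⟩ := hbij.surjOn (hmem.2 h)
  exact ⟨ω, ⟨hω, he⟩, fun y hy => hbij.injOn hy.1 hω (hy.2.trans he.symm)⟩
end

section
/- Let S_z, S_+, S_- be d×d complex matrices satisfying the su(2) relations [S_z, S_±] = ±S_± and [S_+, S_-] = 2S_z, let ε, λ ∈ ℝ, and set H = −2εS_z − λS_+S_- and K = −2ε·𝕀 + 2λS_z. Then [H, S_+] = S_+K, [H, K] = 0, and for all t ∈ ℝ the Heisenberg evolution of S_+ satisfies e^{−itH} S_+ e^{itH} = S_+ · e^{−itK}. -/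
/-!
The relations give `[S_z, S_+ S_-] = 0`, so `K` commutes with `H`, and `[S_+ S_-, S_+] = -2 S_+ S_z`,
so `H S_+ = S_+ (H + K)`. An intertwining relation `a x = x c` exponentiates to
`exp a · x = x · exp c`; with `c = a + b` and `[a, b] = 0` this reads
`exp a · x · exp (-a) = x · exp b`, which is the Heisenberg evolution for `a = -itH`, `b = -itK`.
-/

open NormedSpace

section Su2

variable {R A : Type*} [CommRing R] [Ring A] [Algebra R A] {Sz Sp Sm : A}

theorem commute_mul_of_su2 (hzp : Sz * Sp - Sp * Sz = Sp) (hzm : Sz * Sm - Sm * Sz = -Sm) :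
    Commute Sz (Sp * Sm) := by
  calc Sz * (Sp * Sm) = (Sp + Sp * Sz) * Sm := by rw [← mul_assoc, eq_add_of_sub_eq hzp]
    _ = Sp * (Sz * Sm) + Sp * Sm := by noncomm_ring
    _ = Sp * Sm * Sz := by rw [eq_add_of_sub_eq hzm]; noncomm_ring

theorem su2_bcs_commutator (hzp : Sz * Sp - Sp * Sz = Sp) (hpm : Sp * Sm - Sm * Sp = (2 : R) • Sz)
    (a b : R) :
    (a • Sz - b • (Sp * Sm)) * Sp - Sp * (a • Sz - b • (Sp * Sm)) =
      Sp * (a • 1 + (2 * b) • Sz) := by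
  have hSmSp : Sp * Sm * Sp - Sp * (Sp * Sm) = -(2 : R) • (Sp * Sz) := by
    rw [mul_assoc, ← mul_sub, ← neg_sub, hpm, mul_neg, mul_smul_comm, neg_smul]
  calc (a • Sz - b • (Sp * Sm)) * Sp - Sp * (a • Sz - b • (Sp * Sm))
      = a • (Sz * Sp - Sp * Sz) - b • (Sp * Sm * Sp - Sp * (Sp * Sm)) := by
        simp only [sub_mul, mul_sub, smul_mul_assoc, mul_smul_comm, smul_sub]; abel
    _ = Sp * (a • 1 + (2 * b) • Sz) := by
        rw [hzp, hSmSp, mul_add, mul_smul_comm, mul_one, mul_smul_comm, smul_smul]; module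

theorem su2_bcs_commute (hzp : Sz * Sp - Sp * Sz = Sp) (hzm : Sz * Sm - Sm * Sz = -Sm)
    (a b c e : R) : Commute (a • Sz - b • (Sp * Sm)) (c • 1 + e • Sz) := by
  have hz : Commute Sz (a • Sz - b • (Sp * Sm)) :=
    ((Commute.refl Sz).smul_right a).sub_right ((commute_mul_of_su2 hzp hzm).smul_right b)
  exact (((Commute.one_left _).smul_left c).add_left (hz.smul_left e)).symm

end Su2

theorem NormedSpace.exp_mul_mul_exp_neg_of_commute {𝔸 : Type*} [NormedRing 𝔸] [NormedAlgebra ℚ 𝔸]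
    [CompleteSpace 𝔸] {a b x : 𝔸} (hx : a * x - x * a = x * b) (hab : Commute a b) :
    exp a * x * exp (-a) = x * exp b := by
  have hsemi : SemiconjBy x (b + a) a := by
    rw [SemiconjBy, add_comm, mul_add, ← hx]; abel
  rw [← hsemi.exp_right.eq, exp_add_of_commute hab.symm, mul_assoc, mul_assoc,
    ← exp_add_of_commute (Commute.refl a).neg_right, add_neg_cancel, exp_zero, mul_one]

theorem Matrix.exp_mul_mul_exp_neg_of_commute {m 𝔸 : Type*} [Fintype m] [DecidableEq m]
    [NormedRing 𝔸] [NormedAlgebra ℚ 𝔸] [CompleteSpace 𝔸] {a b x : Matrix m m 𝔸}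
    (hx : a * x - x * a = x * b) (hab : Commute a b) :
    exp a * x * exp (-a) = x * exp b :=
  -- Instance search does not unify the operator-norm uniformity with the product one.
  open scoped Matrix.Norms.Operator in
  @NormedSpace.exp_mul_mul_exp_neg_of_commute _ _ _ (Matrix.instCompleteSpace m m 𝔸) _ _ _ hx hab

/-- For su(2) matrices with H = −2εS_z − λS₊S₋ and K = −2ε𝕀 + 2λS_z one has
[H,S₊] = S₊K, [H,K] = 0, and the Heisenberg evolution e^{−itH} S₊ e^{itH} = S₊ e^{−itK}. -/
theorem bcs_heisenberg_evolution (d : ℕ) (Sz Sp Sm : Matrix (Fin d) (Fin d) ℂ)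
    (hzp : Sz * Sp - Sp * Sz = Sp) (hzm : Sz * Sm - Sm * Sz = -Sm)
    (hpm : Sp * Sm - Sm * Sp = (2 : ℂ) • Sz) (ε lam : ℝ) :
    let H : Matrix (Fin d) (Fin d) ℂ := (-(2 * ε) : ℂ) • Sz - (lam : ℂ) • (Sp * Sm)
    let K : Matrix (Fin d) (Fin d) ℂ :=
      (-(2 * ε) : ℂ) • (1 : Matrix (Fin d) (Fin d) ℂ) + ((2 * lam : ℝ) : ℂ) • Sz
    (H * Sp - Sp * H = Sp * K) ∧ (H * K - K * H = 0) ∧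
    ∀ t : ℝ,
      NormedSpace.exp ((-(Complex.I * t)) • H) * Sp *
          NormedSpace.exp ((Complex.I * t) • H)
        = Sp * NormedSpace.exp ((-(Complex.I * t)) • K) := by
  intro H K
  have hHSp : H * Sp - Sp * H = Sp * K := by
    simpa only [K, Complex.ofReal_mul, Complex.ofReal_ofNat] using su2_bcs_commutator hzp hpm _ _
  have hHK : Commute H K := su2_bcs_commute hzp hzm _ _ _ _
  refine ⟨hHSp, sub_eq_zero.mpr hHK.eq, fun t => ?_⟩
  have hscaled : ((-(Complex.I * t)) • H) * Sp - Sp * ((-(Complex.I * t)) • H) =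
      Sp * ((-(Complex.I * t)) • K) := by
    rw [smul_mul_assoc, mul_smul_comm, ← smul_sub, hHSp, mul_smul_comm]
  simpa only [neg_smul, neg_neg] using
    Matrix.exp_mul_mul_exp_neg_of_commute hscaled ((hHK.smul_left _).smul_right _)
end
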